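/- arXiv:2107.10586 — 4 statements merged into one kernel-verified Lean document; each statement's English description precedes it below -/
import Mathlib

section
/- If z(θ) = x(θ) + i y(θ) denotes the curve e^{θS}·z₀ in the upper half-plane, then x and y satisfy the ODE system dx/dθ = 1 + x² − y² and dy/dθ = 2xy. -/
/-!
The orbit z(θ) solves the Riccati equation z' = 1 + z², because numerator N and denominator D of
the Möbius transform satisfy N' = D and D' = -N. Taking real and imaginary parts of 1 + z² gives
the system. The denominator does not vanish since z₀ is not real.
-/

open Complex Real

/-- The Möbius action of the rotation e^{θS} = [[cos θ, sin θ],[−sin θ, cos θ]]. -/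
noncomputable def rotAct (θ : ℝ) (z : ℂ) : ℂ :=
  ((Real.cos θ : ℂ) * z + (Real.sin θ : ℂ)) / (-(Real.sin θ : ℂ) * z + (Real.cos θ : ℂ))

theorem HasDerivAt.complex_re {f : ℝ → ℂ} {w : ℂ} {t : ℝ} (hf : HasDerivAt f w t) :
    HasDerivAt (fun s => (f s).re) w.re t :=
  reCLM.hasFDerivAt.comp_hasDerivAt t hf

theorem HasDerivAt.complex_im {f : ℝ → ℂ} {w : ℂ} {t : ℝ} (hf : HasDerivAt f w t) :
    HasDerivAt (fun s => (f s).im) w.im t :=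
  imCLM.hasFDerivAt.comp_hasDerivAt t hf

theorem rotAct_denom_ne_zero {z : ℂ} (hz : z.im ≠ 0) (θ : ℝ) :
    -(Real.sin θ : ℂ) * z + (Real.cos θ : ℂ) ≠ 0 := by
  intro h
  have hsin : Real.sin θ = 0 := by
    have him := congrArg Complex.im h
    simp only [add_im, mul_im, neg_re, neg_im, ofReal_re, ofReal_im, zero_im] at him
    simpa [hz] using him
  have hcos : Real.cos θ = 0 := by
    have hre := congrArg Complex.re h
    simpa only [add_re, mul_re, neg_re, neg_im, ofReal_re, ofReal_im, hsin, zero_re, neg_zero,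
      zero_mul, mul_zero, sub_zero, zero_add] using hre
  simpa [hsin, hcos] using Real.sin_sq_add_cos_sq θ

theorem hasDerivAt_ofReal_cos (θ : ℝ) :
    HasDerivAt (fun t : ℝ => (Real.cos t : ℂ)) (-(Real.sin θ : ℂ)) θ := by
  simpa using (Real.hasDerivAt_cos θ).ofReal_comp

theorem hasDerivAt_ofReal_sin (θ : ℝ) :
    HasDerivAt (fun t : ℝ => (Real.sin t : ℂ)) (Real.cos θ : ℂ) θ :=
  (Real.hasDerivAt_sin θ).ofReal_comp

theorem hasDerivAt_rotAct {z : ℂ} (hz : z.im ≠ 0) (θ : ℝ) :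
    HasDerivAt (fun t => rotAct t z) (1 + rotAct θ z ^ 2) θ := by
  have hnum : HasDerivAt (fun t : ℝ => (Real.cos t : ℂ) * z + Real.sin t)
      (-(Real.sin θ : ℂ) * z + Real.cos θ) θ :=
    ((hasDerivAt_ofReal_cos θ).mul_const z).add (hasDerivAt_ofReal_sin θ)
  have hden : HasDerivAt (fun t : ℝ => -(Real.sin t : ℂ) * z + Real.cos t)
      (-((Real.cos θ : ℂ) * z + Real.sin θ)) θ :=
    (((hasDerivAt_ofReal_sin θ).neg.mul_const z).add (hasDerivAt_ofReal_cos θ)).congr_deriv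
      (by ring)
  have hD := rotAct_denom_ne_zero hz θ
  refine (hnum.div hden hD).congr_deriv ?_
  rw [rotAct]
  generalize (Real.cos θ : ℂ) * z + Real.sin θ = N at hD ⊢
  generalize -(Real.sin θ : ℂ) * z + Real.cos θ = D at hD ⊢
  field_simp
  ring

/-- writing z(θ) = e^{θS}·z₀ = x(θ) + i y(θ), one has
dx/dθ = 1 + x² − y² and dy/dθ = 2xy. -/
theorem rot_orbit_ode (z₀ : ℂ) (hz₀ : 0 < z₀.im)
    (x y : ℝ → ℝ) (hx : ∀ θ, x θ = (rotAct θ z₀).re) (hy : ∀ θ, y θ = (rotAct θ z₀).im) :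
    ∀ θ : ℝ, HasDerivAt x (1 + x θ ^ 2 - y θ ^ 2) θ ∧ HasDerivAt y (2 * x θ * y θ) θ := by
  intro θ
  have hz := hasDerivAt_rotAct hz₀.ne' θ
  rw [hx θ, hy θ, funext hx, funext hy]
  refine ⟨hz.complex_re.congr_deriv ?_, hz.complex_im.congr_deriv ?_⟩ <;>
  · simp only [add_re, add_im, one_re, one_im, sq, mul_re, mul_im]
    ring
end

section
/- The magnetic operators Ŝ_B = (1 + x² − y²)∂ₓ + 2xy∂ᵧ + 2iBy, T̂_B = ∂ₓ, Û_B = 2x∂ₓ + 2y∂ᵧ (with B a real constant) satisfy the same commutation relations as in the non-magnetic case: [Û_B, T̂_B] = −2T̂_B, [Û_B, Ŝ_B] = −4T̂_B + 2Ŝ_B, [Ŝ_B, T̂_B] = −Û_B. In particular, the Lie algebra they generate is isomorphic to sl₂(ℝ). -/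
open Complex

noncomputable def pdx (f : ℝ × ℝ → ℂ) : ℝ × ℝ → ℂ := fun p => deriv (fun x => f (x, p.2)) p.1
noncomputable def pdy (f : ℝ × ℝ → ℂ) : ℝ × ℝ → ℂ := fun p => deriv (fun y => f (p.1, y)) p.2

/-- Ŝ_B = (1 + x² − y²)∂ₓ + 2xy∂ᵧ + 2iBy. -/
noncomputable def SopB (B : ℝ) (f : ℝ × ℝ → ℂ) : ℝ × ℝ → ℂ :=
  fun p => ((1 + p.1 ^ 2 - p.2 ^ 2 : ℝ) : ℂ) * pdx f p + ((2 * p.1 * p.2 : ℝ) : ℂ) * pdy f p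
    + 2 * Complex.I * (B : ℂ) * (p.2 : ℂ) * f p

/-- T̂_B = ∂ₓ. -/
noncomputable def TopB (B : ℝ) (f : ℝ × ℝ → ℂ) : ℝ × ℝ → ℂ := pdx f

/-- Û_B = 2x∂ₓ + 2y∂ᵧ. -/
noncomputable def UopB (B : ℝ) (f : ℝ × ℝ → ℂ) : ℝ × ℝ → ℂ :=
  fun p => ((2 * p.1 : ℝ) : ℂ) * pdx f p + ((2 * p.2 : ℝ) : ℂ) * pdy f p

/-! ### Auxiliary lemmas -/

lemma pdx_eq_fderiv {g : ℝ × ℝ → ℂ} {p : ℝ × ℝ} (hg : DifferentiableAt ℝ g p) :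
    pdx g p = fderiv ℝ g p (1, 0) := by
  have h1 : HasFDerivAt (fun x : ℝ => (x, p.2))
      ((ContinuousLinearMap.id ℝ ℝ).prod 0) p.1 :=
    HasFDerivAt.prodMk (hasFDerivAt_id _) (hasFDerivAt_const _ _)
  have h2 := (hg.hasFDerivAt.comp p.1 h1).hasDerivAt
  simpa [pdx, Function.comp_def] using h2.deriv

lemma pdy_eq_fderiv {g : ℝ × ℝ → ℂ} {p : ℝ × ℝ} (hg : DifferentiableAt ℝ g p) :
    pdy g p = fderiv ℝ g p (0, 1) := by
  have h1 : HasFDerivAt (fun y : ℝ => (p.1, y))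
      ((0 : ℝ →L[ℝ] ℝ).prod (ContinuousLinearMap.id ℝ ℝ)) p.2 :=
    HasFDerivAt.prodMk (hasFDerivAt_const _ _) (hasFDerivAt_id _)
  have h2 := (hg.hasFDerivAt.comp p.2 h1).hasDerivAt
  simpa [pdy, Function.comp_def] using h2.deriv

lemma contDiff_pdx {g : ℝ × ℝ → ℂ} (hg : ContDiff ℝ (⊤ : ℕ∞) g) : ContDiff ℝ (⊤ : ℕ∞) (pdx g) := by
  have : pdx g = fun p => fderiv ℝ g p (1, 0) :=
    funext fun p => pdx_eq_fderiv (hg.differentiable (by simp)).differentiableAt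
  rw [this]
  exact (hg.fderiv_right (by simp)).clm_apply contDiff_const

lemma contDiff_pdy {g : ℝ × ℝ → ℂ} (hg : ContDiff ℝ (⊤ : ℕ∞) g) : ContDiff ℝ (⊤ : ℕ∞) (pdy g) := by
  have : pdy g = fun p => fderiv ℝ g p (0, 1) :=
    funext fun p => pdy_eq_fderiv (hg.differentiable (by simp)).differentiableAt
  rw [this]
  exact (hg.fderiv_right (by simp)).clm_apply contDiff_const

lemma schwarz {g : ℝ × ℝ → ℂ} (hg : ContDiff ℝ (⊤ : ℕ∞) g) (p : ℝ × ℝ) :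
    pdx (pdy g) p = pdy (pdx g) p := by
  have hdg : Differentiable ℝ g := hg.differentiable (by simp)
  have hF : Differentiable ℝ (fderiv ℝ g) := (hg.fderiv_right (m := 1) (WithTop.coe_le_coe.mpr le_top)).differentiable one_ne_zero
  have hx : pdx g = fun q => fderiv ℝ g q (1, 0) :=
    funext fun q => pdx_eq_fderiv (hdg q)
  have hy : pdy g = fun q => fderiv ℝ g q (0, 1) :=
    funext fun q => pdy_eq_fderiv (hdg q)
  have hsym := second_derivative_symmetric (f := g) (f' := fderiv ℝ g)
    (f'' := fderiv ℝ (fderiv ℝ g) p) (fun y => (hdg y).hasFDerivAt) (hF p).hasFDerivAt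
  rw [pdx_eq_fderiv (by rw [hy]; exact (hF.clm_apply (differentiable_const _)).differentiableAt),
    pdy_eq_fderiv (by rw [hx]; exact (hF.clm_apply (differentiable_const _)).differentiableAt),
    hx, hy]
  rw [fderiv_clm_apply (hF p) (differentiableAt_const _),
    fderiv_clm_apply (hF p) (differentiableAt_const _)]
  simpa using hsym (1, 0) (0, 1)

lemma pdx_add {u v : ℝ × ℝ → ℂ} {p : ℝ × ℝ} (hu : DifferentiableAt ℝ u p)
    (hv : DifferentiableAt ℝ v p) :
    pdx (fun q => u q + v q) p = pdx u p + pdx v p := by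
  have h1 : HasFDerivAt (fun x : ℝ => (x, p.2))
      ((ContinuousLinearMap.id ℝ ℝ).prod 0) p.1 :=
    HasFDerivAt.prodMk (hasFDerivAt_id _) (hasFDerivAt_const _ _)
  have hu' : DifferentiableAt ℝ (fun x => u (x, p.2)) p.1 := hu.comp p.1 h1.differentiableAt
  have hv' : DifferentiableAt ℝ (fun x => v (x, p.2)) p.1 := hv.comp p.1 h1.differentiableAt
  simp only [pdx]
  exact deriv_add hu' hv'

lemma pdy_add {u v : ℝ × ℝ → ℂ} {p : ℝ × ℝ} (hu : DifferentiableAt ℝ u p)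
    (hv : DifferentiableAt ℝ v p) :
    pdy (fun q => u q + v q) p = pdy u p + pdy v p := by
  have h1 : HasFDerivAt (fun y : ℝ => (p.1, y))
      ((0 : ℝ →L[ℝ] ℝ).prod (ContinuousLinearMap.id ℝ ℝ)) p.2 :=
    HasFDerivAt.prodMk (hasFDerivAt_const _ _) (hasFDerivAt_id _)
  have hu' : DifferentiableAt ℝ (fun y => u (p.1, y)) p.2 := hu.comp p.2 h1.differentiableAt
  have hv' : DifferentiableAt ℝ (fun y => v (p.1, y)) p.2 := hv.comp p.2 h1.differentiableAt
  simp only [pdy]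
  exact deriv_add hu' hv'

lemma pdx_mul {u v : ℝ × ℝ → ℂ} {p : ℝ × ℝ} (hu : DifferentiableAt ℝ u p)
    (hv : DifferentiableAt ℝ v p) :
    pdx (fun q => u q * v q) p = pdx u p * v p + u p * pdx v p := by
  have h1 : HasFDerivAt (fun x : ℝ => (x, p.2))
      ((ContinuousLinearMap.id ℝ ℝ).prod 0) p.1 :=
    HasFDerivAt.prodMk (hasFDerivAt_id _) (hasFDerivAt_const _ _)
  have hu' : DifferentiableAt ℝ (fun x => u (x, p.2)) p.1 := hu.comp p.1 h1.differentiableAt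
  have hv' : DifferentiableAt ℝ (fun x => v (x, p.2)) p.1 := hv.comp p.1 h1.differentiableAt
  simp only [pdx]
  exact deriv_mul hu' hv'

lemma pdy_mul {u v : ℝ × ℝ → ℂ} {p : ℝ × ℝ} (hu : DifferentiableAt ℝ u p)
    (hv : DifferentiableAt ℝ v p) :
    pdy (fun q => u q * v q) p = pdy u p * v p + u p * pdy v p := by
  have h1 : HasFDerivAt (fun y : ℝ => (p.1, y))
      ((0 : ℝ →L[ℝ] ℝ).prod (ContinuousLinearMap.id ℝ ℝ)) p.2 :=
    HasFDerivAt.prodMk (hasFDerivAt_const _ _) (hasFDerivAt_id _)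
  have hu' : DifferentiableAt ℝ (fun y => u (p.1, y)) p.2 := hu.comp p.2 h1.differentiableAt
  have hv' : DifferentiableAt ℝ (fun y => v (p.1, y)) p.2 := hv.comp p.2 h1.differentiableAt
  simp only [pdy]
  exact deriv_mul hu' hv'

/-! ### Smoothness of the coefficient functions -/

lemma contDiff_c1 : ContDiff ℝ (⊤ : ℕ∞) (fun q : ℝ × ℝ => ((1 + q.1 ^ 2 - q.2 ^ 2 : ℝ) : ℂ)) :=
  Complex.ofRealCLM.contDiff.comp
    ((contDiff_const.add (contDiff_fst.pow 2)).sub (contDiff_snd.pow 2))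

lemma contDiff_c2 : ContDiff ℝ (⊤ : ℕ∞) (fun q : ℝ × ℝ => ((2 * q.1 * q.2 : ℝ) : ℂ)) :=
  Complex.ofRealCLM.contDiff.comp ((contDiff_const.mul contDiff_fst).mul contDiff_snd)

lemma contDiff_c3 (B : ℝ) :
    ContDiff ℝ (⊤ : ℕ∞) (fun q : ℝ × ℝ => 2 * Complex.I * (B : ℂ) * (q.2 : ℂ)) :=
  contDiff_const.mul (Complex.ofRealCLM.contDiff.comp contDiff_snd)

lemma contDiff_u1 : ContDiff ℝ (⊤ : ℕ∞) (fun q : ℝ × ℝ => ((2 * q.1 : ℝ) : ℂ)) :=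
  Complex.ofRealCLM.contDiff.comp (contDiff_const.mul contDiff_fst)

lemma contDiff_u2 : ContDiff ℝ (⊤ : ℕ∞) (fun q : ℝ × ℝ => ((2 * q.2 : ℝ) : ℂ)) :=
  Complex.ofRealCLM.contDiff.comp (contDiff_const.mul contDiff_snd)

/-! ### Derivatives of the coefficient functions -/

lemma pdx_c1 (p : ℝ × ℝ) :
    pdx (fun q => ((1 + q.1 ^ 2 - q.2 ^ 2 : ℝ) : ℂ)) p = ((2 * p.1 : ℝ) : ℂ) := by
  have h : HasDerivAt (fun x : ℝ => 1 + x ^ 2 - p.2 ^ 2) (2 * p.1) p.1 := by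
    simpa using (((hasDerivAt_pow 2 p.1).const_add 1).sub_const (p.2 ^ 2))
  simpa [pdx] using h.ofReal_comp.deriv

lemma pdy_c1 (p : ℝ × ℝ) :
    pdy (fun q => ((1 + q.1 ^ 2 - q.2 ^ 2 : ℝ) : ℂ)) p = -((2 * p.2 : ℝ) : ℂ) := by
  have h : HasDerivAt (fun y : ℝ => 1 + p.1 ^ 2 - y ^ 2) (-(2 * p.2)) p.2 := by
    simpa using ((hasDerivAt_pow 2 p.2).const_sub (1 + p.1 ^ 2))
  simpa [pdy] using h.ofReal_comp.deriv

lemma pdx_c2 (p : ℝ × ℝ) :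
    pdx (fun q => ((2 * q.1 * q.2 : ℝ) : ℂ)) p = ((2 * p.2 : ℝ) : ℂ) := by
  have h : HasDerivAt (fun x : ℝ => 2 * x * p.2) (2 * p.2) p.1 := by
    simpa [mul_comm, mul_assoc] using ((hasDerivAt_id p.1).const_mul 2).mul_const p.2
  simpa [pdx] using h.ofReal_comp.deriv

lemma pdy_c2 (p : ℝ × ℝ) :
    pdy (fun q => ((2 * q.1 * q.2 : ℝ) : ℂ)) p = ((2 * p.1 : ℝ) : ℂ) := by
  have h : HasDerivAt (fun y : ℝ => 2 * p.1 * y) (2 * p.1) p.2 := by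
    simpa using (hasDerivAt_id p.2).const_mul (2 * p.1)
  simpa [pdy] using h.ofReal_comp.deriv

lemma pdx_u1 (p : ℝ × ℝ) : pdx (fun q => ((2 * q.1 : ℝ) : ℂ)) p = 2 := by
  have h : HasDerivAt (fun x : ℝ => 2 * x) 2 p.1 := by
    simpa using (hasDerivAt_id p.1).const_mul 2
  simpa [pdx] using h.ofReal_comp.deriv

lemma pdy_u1 (p : ℝ × ℝ) : pdy (fun q => ((2 * q.1 : ℝ) : ℂ)) p = 0 := by
  simp [pdy]

lemma pdx_u2 (p : ℝ × ℝ) : pdx (fun q => ((2 * q.2 : ℝ) : ℂ)) p = 0 := by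
  simp [pdx]

lemma pdy_u2 (p : ℝ × ℝ) : pdy (fun q => ((2 * q.2 : ℝ) : ℂ)) p = 2 := by
  have h : HasDerivAt (fun y : ℝ => 2 * y) 2 p.2 := by
    simpa using (hasDerivAt_id p.2).const_mul 2
  simpa [pdy] using h.ofReal_comp.deriv

lemma pdx_c3 (B : ℝ) (p : ℝ × ℝ) :
    pdx (fun q => 2 * Complex.I * (B : ℂ) * (q.2 : ℂ)) p = 0 := by
  simp [pdx]

lemma pdy_c3 (B : ℝ) (p : ℝ × ℝ) :
    pdy (fun q => 2 * Complex.I * (B : ℂ) * (q.2 : ℂ)) p = 2 * Complex.I * (B : ℂ) := by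
  have h0 : HasDerivAt (fun y : ℝ => y) 1 p.2 := hasDerivAt_id p.2
  have h : HasDerivAt (fun y : ℝ => 2 * Complex.I * (B : ℂ) * (y : ℂ))
      (2 * Complex.I * (B : ℂ)) p.2 := by
    simpa using h0.ofReal_comp.const_mul (2 * Complex.I * (B : ℂ))
  simpa [pdy] using h.deriv

/-! ### Expansions of the operators' derivatives -/

lemma pdxU (B : ℝ) {f : ℝ × ℝ → ℂ} (hf : ContDiff ℝ (⊤ : ℕ∞) f) (p : ℝ × ℝ) :
    pdx (UopB B f) p = 2 * pdx f p + ((2 * p.1 : ℝ) : ℂ) * pdx (pdx f) p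
      + ((2 * p.2 : ℝ) : ℂ) * pdx (pdy f) p := by
  have ha := contDiff_pdx hf
  have hb := contDiff_pdy hf
  have d1 : DifferentiableAt ℝ (fun q : ℝ × ℝ => ((2 * q.1 : ℝ) : ℂ) * pdx f q) p :=
    ((contDiff_u1.differentiable (by simp)) p).mul ((ha.differentiable (by simp)) p)
  have d2 : DifferentiableAt ℝ (fun q : ℝ × ℝ => ((2 * q.2 : ℝ) : ℂ) * pdy f q) p :=
    ((contDiff_u2.differentiable (by simp)) p).mul ((hb.differentiable (by simp)) p)
  show pdx (fun q => ((2 * q.1 : ℝ) : ℂ) * pdx f q + ((2 * q.2 : ℝ) : ℂ) * pdy f q) p = _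
  rw [pdx_add d1 d2,
    pdx_mul ((contDiff_u1.differentiable (by simp)) p) ((ha.differentiable (by simp)) p),
    pdx_mul ((contDiff_u2.differentiable (by simp)) p) ((hb.differentiable (by simp)) p),
    pdx_u1, pdx_u2]
  ring

lemma pdyU (B : ℝ) {f : ℝ × ℝ → ℂ} (hf : ContDiff ℝ (⊤ : ℕ∞) f) (p : ℝ × ℝ) :
    pdy (UopB B f) p = ((2 * p.1 : ℝ) : ℂ) * pdy (pdx f) p + 2 * pdy f p
      + ((2 * p.2 : ℝ) : ℂ) * pdy (pdy f) p := by
  have ha := contDiff_pdx hf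
  have hb := contDiff_pdy hf
  have d1 : DifferentiableAt ℝ (fun q : ℝ × ℝ => ((2 * q.1 : ℝ) : ℂ) * pdx f q) p :=
    ((contDiff_u1.differentiable (by simp)) p).mul ((ha.differentiable (by simp)) p)
  have d2 : DifferentiableAt ℝ (fun q : ℝ × ℝ => ((2 * q.2 : ℝ) : ℂ) * pdy f q) p :=
    ((contDiff_u2.differentiable (by simp)) p).mul ((hb.differentiable (by simp)) p)
  show pdy (fun q => ((2 * q.1 : ℝ) : ℂ) * pdx f q + ((2 * q.2 : ℝ) : ℂ) * pdy f q) p = _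
  rw [pdy_add d1 d2,
    pdy_mul ((contDiff_u1.differentiable (by simp)) p) ((ha.differentiable (by simp)) p),
    pdy_mul ((contDiff_u2.differentiable (by simp)) p) ((hb.differentiable (by simp)) p),
    pdy_u1, pdy_u2]
  ring

lemma pdxS (B : ℝ) {f : ℝ × ℝ → ℂ} (hf : ContDiff ℝ (⊤ : ℕ∞) f) (p : ℝ × ℝ) :
    pdx (SopB B f) p = ((2 * p.1 : ℝ) : ℂ) * pdx f p
      + ((1 + p.1 ^ 2 - p.2 ^ 2 : ℝ) : ℂ) * pdx (pdx f) p
      + ((2 * p.2 : ℝ) : ℂ) * pdy f p + ((2 * p.1 * p.2 : ℝ) : ℂ) * pdx (pdy f) p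
      + 2 * Complex.I * (B : ℂ) * (p.2 : ℂ) * pdx f p := by
  have ha := contDiff_pdx hf
  have hb := contDiff_pdy hf
  have d1 : DifferentiableAt ℝ
      (fun q : ℝ × ℝ => ((1 + q.1 ^ 2 - q.2 ^ 2 : ℝ) : ℂ) * pdx f q) p :=
    ((contDiff_c1.differentiable (by simp)) p).mul ((ha.differentiable (by simp)) p)
  have d2 : DifferentiableAt ℝ (fun q : ℝ × ℝ => ((2 * q.1 * q.2 : ℝ) : ℂ) * pdy f q) p :=
    ((contDiff_c2.differentiable (by simp)) p).mul ((hb.differentiable (by simp)) p)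
  have d3 : DifferentiableAt ℝ (fun q : ℝ × ℝ => 2 * Complex.I * (B : ℂ) * (q.2 : ℂ) * f q) p :=
    (((contDiff_c3 B).differentiable (by simp)) p).mul ((hf.differentiable (by simp)) p)
  show pdx (fun q => ((1 + q.1 ^ 2 - q.2 ^ 2 : ℝ) : ℂ) * pdx f q
      + ((2 * q.1 * q.2 : ℝ) : ℂ) * pdy f q
      + 2 * Complex.I * (B : ℂ) * (q.2 : ℂ) * f q) p = _
  rw [pdx_add (u := fun q : ℝ × ℝ => ((1 + q.1 ^ 2 - q.2 ^ 2 : ℝ) : ℂ) * pdx f q + ((2 * q.1 * q.2 : ℝ) : ℂ) * pdy f q) (d1.add d2) d3, pdx_add d1 d2,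
    pdx_mul ((contDiff_c1.differentiable (by simp)) p) ((ha.differentiable (by simp)) p),
    pdx_mul ((contDiff_c2.differentiable (by simp)) p) ((hb.differentiable (by simp)) p),
    pdx_mul (((contDiff_c3 B).differentiable (by simp)) p) ((hf.differentiable (by simp)) p),
    pdx_c1, pdx_c2, pdx_c3]
  ring

lemma pdyS (B : ℝ) {f : ℝ × ℝ → ℂ} (hf : ContDiff ℝ (⊤ : ℕ∞) f) (p : ℝ × ℝ) :
    pdy (SopB B f) p = -((2 * p.2 : ℝ) : ℂ) * pdx f p
      + ((1 + p.1 ^ 2 - p.2 ^ 2 : ℝ) : ℂ) * pdy (pdx f) p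
      + ((2 * p.1 : ℝ) : ℂ) * pdy f p + ((2 * p.1 * p.2 : ℝ) : ℂ) * pdy (pdy f) p
      + 2 * Complex.I * (B : ℂ) * f p
      + 2 * Complex.I * (B : ℂ) * (p.2 : ℂ) * pdy f p := by
  have ha := contDiff_pdx hf
  have hb := contDiff_pdy hf
  have d1 : DifferentiableAt ℝ
      (fun q : ℝ × ℝ => ((1 + q.1 ^ 2 - q.2 ^ 2 : ℝ) : ℂ) * pdx f q) p :=
    ((contDiff_c1.differentiable (by simp)) p).mul ((ha.differentiable (by simp)) p)
  have d2 : DifferentiableAt ℝ (fun q : ℝ × ℝ => ((2 * q.1 * q.2 : ℝ) : ℂ) * pdy f q) p :=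
    ((contDiff_c2.differentiable (by simp)) p).mul ((hb.differentiable (by simp)) p)
  have d3 : DifferentiableAt ℝ (fun q : ℝ × ℝ => 2 * Complex.I * (B : ℂ) * (q.2 : ℂ) * f q) p :=
    (((contDiff_c3 B).differentiable (by simp)) p).mul ((hf.differentiable (by simp)) p)
  show pdy (fun q => ((1 + q.1 ^ 2 - q.2 ^ 2 : ℝ) : ℂ) * pdx f q
      + ((2 * q.1 * q.2 : ℝ) : ℂ) * pdy f q
      + 2 * Complex.I * (B : ℂ) * (q.2 : ℂ) * f q) p = _
  rw [pdy_add (u := fun q : ℝ × ℝ => ((1 + q.1 ^ 2 - q.2 ^ 2 : ℝ) : ℂ) * pdx f q + ((2 * q.1 * q.2 : ℝ) : ℂ) * pdy f q) (d1.add d2) d3, pdy_add d1 d2,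
    pdy_mul ((contDiff_c1.differentiable (by simp)) p) ((ha.differentiable (by simp)) p),
    pdy_mul ((contDiff_c2.differentiable (by simp)) p) ((hb.differentiable (by simp)) p),
    pdy_mul (((contDiff_c3 B).differentiable (by simp)) p) ((hf.differentiable (by simp)) p),
    pdy_c1, pdy_c2, pdy_c3]
  ring

/-- [Û_B,T̂_B] = −2T̂_B, [Û_B,Ŝ_B] = −4T̂_B + 2Ŝ_B, [Ŝ_B,T̂_B] = −Û_B
on smooth functions, i.e. the same sl₂(ℝ) relations as without magnetic field. -/
theorem magnetic_operator_commutation_relations (B : ℝ)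
    (f : ℝ × ℝ → ℂ) (hf : ContDiff ℝ (⊤ : ℕ∞) f) (p : ℝ × ℝ) :
    UopB B (TopB B f) p - TopB B (UopB B f) p = -2 * TopB B f p ∧
    UopB B (SopB B f) p - SopB B (UopB B f) p = -4 * TopB B f p + 2 * SopB B f p ∧
    SopB B (TopB B f) p - TopB B (SopB B f) p = -(UopB B f p) := by
  have hsch : pdx (pdy f) p = pdy (pdx f) p := schwarz hf p
  have hUx := pdxU B hf p
  have hUy := pdyU B hf p
  have hSx := pdxS B hf p
  have hSy := pdyS B hf p
  have hUT : UopB B (TopB B f) p = ((2 * p.1 : ℝ) : ℂ) * pdx (pdx f) p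
      + ((2 * p.2 : ℝ) : ℂ) * pdy (pdx f) p := rfl
  have hST : SopB B (TopB B f) p = ((1 + p.1 ^ 2 - p.2 ^ 2 : ℝ) : ℂ) * pdx (pdx f) p
      + ((2 * p.1 * p.2 : ℝ) : ℂ) * pdy (pdx f) p
      + 2 * Complex.I * (B : ℂ) * (p.2 : ℂ) * pdx f p := rfl
  have hUS : UopB B (SopB B f) p = ((2 * p.1 : ℝ) : ℂ) * pdx (SopB B f) p
      + ((2 * p.2 : ℝ) : ℂ) * pdy (SopB B f) p := rfl
  have hSU : SopB B (UopB B f) p = ((1 + p.1 ^ 2 - p.2 ^ 2 : ℝ) : ℂ) * pdx (UopB B f) p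
      + ((2 * p.1 * p.2 : ℝ) : ℂ) * pdy (UopB B f) p
      + 2 * Complex.I * (B : ℂ) * (p.2 : ℂ) * UopB B f p := rfl
  have hU : UopB B f p = ((2 * p.1 : ℝ) : ℂ) * pdx f p + ((2 * p.2 : ℝ) : ℂ) * pdy f p := rfl
  have hS : SopB B f p = ((1 + p.1 ^ 2 - p.2 ^ 2 : ℝ) : ℂ) * pdx f p
      + ((2 * p.1 * p.2 : ℝ) : ℂ) * pdy f p
      + 2 * Complex.I * (B : ℂ) * (p.2 : ℂ) * f p := rfl
  have hT : TopB B f p = pdx f p := rfl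
  refine ⟨?_, ?_, ?_⟩
  · show UopB B (TopB B f) p - pdx (UopB B f) p = -2 * TopB B f p
    rw [hUT, hUx, hT, hsch]
    push_cast
    ring
  · rw [hUS, hSU, hSx, hSy, hUx, hUy, hU, hS, hT, hsch]
    push_cast
    ring
  · show SopB B (TopB B f) p - pdx (SopB B f) p = -(UopB B f p)
    rw [hST, hSx, hU, hsch]
    push_cast
    ring
end

section
/- Let g ≥ 2 and let γ₁,…,γ_{2g} ∈ SL(2,ℝ) be the standard generators of the Fuchsian group of the {4g,4g} tiling, γⱼ = R((j−1)π/4g) diag(e^μ, e^{−μ}) R(−(j−1)π/4g) with e^μ = cot(π/4g) + √(cot²(π/4g) − 1). Then in PSL(2,ℝ) the relation γ₁γ₂⁻¹···γ_{2g}⁻¹γ₁⁻¹γ₂···γ_{2g} = ±1 holds (the product is a scalar matrix ±Id). -/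
open Real

/-- Rotation matrix R(θ). -/
noncomputable def Rot (θ : ℝ) : Matrix (Fin 2) (Fin 2) ℝ :=
  !![Real.cos θ, Real.sin θ; -Real.sin θ, Real.cos θ]

/-- The word γ₁γ₂⁻¹γ₃γ₄⁻¹⋯γ_{2g}⁻¹ · γ₁⁻¹γ₂γ₃⁻¹⋯γ_{2g} (inverses on alternate letters). -/
noncomputable def fuchsianWord (g : ℕ) (γ : ℕ → Matrix (Fin 2) (Fin 2) ℝ) :
    Matrix (Fin 2) (Fin 2) ℝ :=
  (((List.range (2 * g)).map fun j => if j % 2 = 0 then γ (j + 1) else (γ (j + 1))⁻¹).prod) *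
  (((List.range (2 * g)).map fun j => if j % 2 = 0 then (γ (j + 1))⁻¹ else γ (j + 1)).prod)

section Aux

lemma Rot_mul (θ φ : ℝ) : Rot θ * Rot φ = Rot (θ + φ) := by
  ext i j
  fin_cases i <;> fin_cases j <;>
    simp [Rot, Matrix.mul_apply, Fin.sum_univ_two, Real.cos_add, Real.sin_add] <;> ring

lemma Rot_zero : Rot 0 = 1 := by
  ext i j; fin_cases i <;> fin_cases j <;> simp [Rot]

lemma Rot_inv_cancel (x : ℝ) : Rot (-x) * Rot x = 1 := by
  rw [Rot_mul, neg_add_cancel, Rot_zero]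

lemma Rot_cancel_inv (x : ℝ) : Rot x * Rot (-x) = 1 := by
  rw [Rot_mul, add_neg_cancel, Rot_zero]

lemma Rot_neg_pi : Rot (-π) = -1 := by
  ext i j; fin_cases i <;> fin_cases j <;> simp [Rot]

/-- conjugation by a quarter rotation -/
lemma Rot_quarter_conj (p q r t : ℝ) :
    Rot (π/2) * !![p,q;r,t] * Rot (-(π/2)) = !![t,-r;-q,p] := by
  ext i j
  fin_cases i <;> fin_cases j <;>
    simp [Rot, Matrix.mul_apply, Fin.sum_univ_two]

lemma Rot_conj_mul (x y : ℝ) (U V : Matrix (Fin 2) (Fin 2) ℝ) :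
    (Rot x * U * Rot (-x)) * (Rot y * V * Rot (-y)) =
      Rot x * (U * Rot (y - x) * V) * Rot (-y) := by
  have h : Rot (-x) * Rot y = Rot (y - x) := by rw [Rot_mul]; congr 1; ring
  simp only [mul_assoc]
  rw [← mul_assoc (Rot (-x)) (Rot y), h]

/-- general two-step telescoping product -/
lemma prod_two_step (E E' : ℕ → Matrix (Fin 2) (Fin 2) ℝ) (α : ℝ)
    (X : Matrix (Fin 2) (Fin 2) ℝ)
    (hX : X = E 0 * Rot α * E' 0 * Rot α)
    (hE : ∀ m, E m = E 0) (hE' : ∀ m, E' m = E' 0)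
    (f : ℕ → Matrix (Fin 2) (Fin 2) ℝ)
    (hf : ∀ j, f j = Rot (j * α) * (if j % 2 = 0 then E j else E' j) * Rot (-(j * α))) :
    ∀ m : ℕ, ((List.range (2*m)).map f).prod = X ^ m * Rot (-(2*m*α)) := by
  intro m
  induction m with
  | zero => simp [Rot_zero]
  | succ m ih =>
    have h2m : (2*(m+1)) = (2*m) + 1 + 1 := by ring
    rw [h2m, List.range_succ, List.range_succ, List.map_append, List.map_append,
      List.prod_append, List.prod_append, ih]
    simp only [List.map_singleton, List.prod_singleton]
    have hmod0 : (2*m) % 2 = 0 := by omega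
    have hmod1 : (2*m+1) % 2 = 1 := by omega
    rw [hf (2*m), hf (2*m+1), hmod0, hmod1]
    simp only [hmod0, hmod1, if_pos rfl]
    norm_num
    rw [hE (2*m), hE' (2*m+1)]
    push_cast
    rw [mul_assoc (X^m * Rot (-(2*(m:ℝ)*α))), Rot_conj_mul]
    have hang : ((2*(m:ℝ)+1) * α - 2*(m:ℝ)*α) = α := by ring
    rw [hang]
    have e1 : Rot (-(2*(m:ℝ)*α)) * (Rot (2*(m:ℝ)*α) * (E 0 * Rot α * E' 0) *
        Rot (-((2*(m:ℝ)+1) * α))) =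
        (E 0 * Rot α * E' 0) * Rot (-((2*(m:ℝ)+1) * α)) := by
      rw [← mul_assoc, ← mul_assoc, Rot_inv_cancel, one_mul, mul_assoc]
    rw [mul_assoc, e1, pow_succ, hX]
    have e2 : Rot α * Rot (-(2*(((m:ℝ)+1)*α))) = Rot (-((2*(m:ℝ)+1) * α)) := by
      rw [Rot_mul]; congr 1; ring
    simp only [mul_assoc, e2]

lemma Rot_conj_pow (R R' M : Matrix (Fin 2) (Fin 2) ℝ) (h : R' * R = 1) (h' : R * R' = 1)
    (n : ℕ) : (R * M * R') ^ n = R * M ^ n * R' := by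
  induction n with
  | zero => simp [h']
  | succ n ih =>
    rw [pow_succ, pow_succ, ih]
    simp only [mul_assoc]
    rw [← mul_assoc R' R, h, one_mul]

lemma Bsq (a b c s t : ℝ) (hab : a*b = 1) (h1 : c^2 + s^2 = 1)
    (ht : t = 2*c^2 - s^2*(a^2 + b^2)) :
    !![c^2 - a^2*s^2, s*c*(1+a^2); -(s*c)*(b^2+1), c^2 - b^2*s^2] *
      !![c^2 - a^2*s^2, s*c*(1+a^2); -(s*c)*(b^2+1), c^2 - b^2*s^2] =
    t • !![c^2 - a^2*s^2, s*c*(1+a^2); -(s*c)*(b^2+1), c^2 - b^2*s^2] - 1 := by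
  subst ht
  ext i j
  fin_cases i <;> fin_cases j <;>
    simp [Matrix.mul_apply, Fin.sum_univ_two, Matrix.one_apply] <;>
    first
      | linear_combination (-(c^2+s^2)*s^2*(a*b+1)) * hab + (-(c^2+s^2+1)) * h1
      | ring

lemma hBentries (a b c s : ℝ) (hab : a*b = 1) :
    !![a,0;0,b] * !![c,s;-s,c] * !![b,0;0,a] * !![c,s;-s,c] =
    !![c^2 - a^2*s^2, s*c*(1+a^2); -(s*c)*(b^2+1), c^2 - b^2*s^2] := by
  ext i j
  fin_cases i <;> fin_cases j <;>
    simp [Matrix.mul_apply, Fin.sum_univ_two] <;>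
    first
      | linear_combination c^2 * hab
      | linear_combination s*c * hab
      | linear_combination (-(s*c)) * hab

lemma cheb (M : Matrix (Fin 2) (Fin 2) ℝ) (θ : ℝ) (hs : Real.sin θ ≠ 0)
    (hM : M * M = (2 * Real.cos θ) • M - 1) :
    ∀ n : ℕ, M ^ (n+1) =
      (Real.sin ((n+1) * θ) / Real.sin θ) • M - (Real.sin (n * θ) / Real.sin θ) • 1 := by
  intro n
  induction n with
  | zero => simp [div_self hs]
  | succ n ih =>
    have h2 : Real.sin (((n:ℝ)+1+1) * θ)
        = 2 * Real.cos θ * Real.sin (((n:ℝ)+1) * θ) - Real.sin ((n:ℝ) * θ) := by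
      have e1 : ((n:ℝ)+1+1) * θ = (((n:ℝ)+1) * θ) + θ := by ring
      have e2 : (n:ℝ) * θ = (((n:ℝ)+1) * θ) - θ := by ring
      rw [e1, e2, Real.sin_add, Real.sin_sub]; ring
    rw [pow_succ, ih]
    push_cast
    rw [sub_mul, smul_mul_assoc, smul_mul_assoc, hM, one_mul, h2]
    ext i j
    simp only [Matrix.sub_apply, Matrix.smul_apply, Matrix.one_apply, smul_eq_mul]
    by_cases hij : i = j <;> simp [hij] <;> field_simp <;> ring

end Aux

/-- for the standard generators of the Fuchsian group of the {4g,4g} tiling,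
the surface-group relator γ₁γ₂⁻¹⋯γ_{2g}⁻¹γ₁⁻¹γ₂⋯γ_{2g} equals ±Id, i.e. it is trivial
in PSL(2,ℝ). -/
theorem fuchsian_relation (g : ℕ) (hg : 2 ≤ g) (μ : ℝ)
    (hμ : Real.exp μ = Real.cos (Real.pi / (4 * g)) / Real.sin (Real.pi / (4 * g)) +
      Real.sqrt ((Real.cos (Real.pi / (4 * g)) / Real.sin (Real.pi / (4 * g))) ^ 2 - 1))
    (γ : ℕ → Matrix (Fin 2) (Fin 2) ℝ)
    (hγ : ∀ j, γ j = Rot (((j : ℝ) - 1) * Real.pi / (4 * g)) *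
      !![Real.exp μ, 0; 0, Real.exp (-μ)] * Rot (-(((j : ℝ) - 1) * Real.pi / (4 * g)))) :
    fuchsianWord g γ = 1 ∨ fuchsianWord g γ = -1 := by
  left
  set α : ℝ := Real.pi / (4 * g) with hα
  set a : ℝ := Real.exp μ with ha
  set b : ℝ := Real.exp (-μ) with hb
  set c : ℝ := Real.cos α with hc
  set s : ℝ := Real.sin α with hs
  have hgR : (0:ℝ) < g := by positivity
  have hgne : (g:ℝ) ≠ 0 := ne_of_gt hgR
  have hg2 : (2:ℝ) ≤ (g:ℝ) := by exact_mod_cast hg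
  have hα_pos : 0 < α := by rw [hα]; positivity
  have hα_le : α ≤ Real.pi / 8 := by
    rw [hα]
    apply div_le_div_of_nonneg_left Real.pi_pos.le (by norm_num)
    linarith
  have hα_lt_pi4 : α < Real.pi / 4 := lt_of_le_of_lt hα_le (by linarith [Real.pi_pos])
  have hs_pos : 0 < s := by
    rw [hs]; exact Real.sin_pos_of_pos_of_lt_pi hα_pos (by linarith [Real.pi_pos])
  have hc_pos : 0 < c := by
    rw [hc]; exact Real.cos_pos_of_mem_Ioo ⟨by linarith, by linarith [Real.pi_pos]⟩
  have hsc : s ≤ c := by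
    rw [hs, hc]
    calc Real.sin α ≤ Real.sin (Real.pi/4) := by
          apply Real.sin_le_sin_of_le_of_le_pi_div_two (by linarith) (by linarith) hα_lt_pi4.le
      _ = Real.cos (Real.pi/4) := by rw [Real.sin_pi_div_four, Real.cos_pi_div_four]
      _ ≤ Real.cos α := by
          apply Real.cos_le_cos_of_nonneg_of_le_pi hα_pos.le (by linarith [Real.pi_pos]) hα_lt_pi4.le
  have h1 : c^2 + s^2 = 1 := by rw [hc, hs]; exact Real.cos_sq_add_sin_sq α
  have hab : a * b = 1 := by rw [ha, hb, ← Real.exp_add]; simp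
  have hane : a ≠ 0 := by rw [ha]; exact Real.exp_ne_zero μ
  -- the key relation s(a+b) = 2c
  have hX : (c/s)^2 - 1 ≥ 0 := by
    have h1' : 1 ≤ c / s := (one_le_div hs_pos).mpr hsc
    nlinarith
  have hprod : a * (c/s - Real.sqrt ((c/s)^2 - 1)) = 1 := by
    have hsq := Real.sq_sqrt hX
    rw [hμ]
    have expand : (c/s + Real.sqrt ((c/s)^2 - 1)) * (c/s - Real.sqrt ((c/s)^2 - 1))
        = (c/s)^2 - (Real.sqrt ((c/s)^2 - 1))^2 := by ring
    rw [expand, hsq]; ring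
  have hbval : b = c/s - Real.sqrt ((c/s)^2 - 1) :=
    mul_left_cancel₀ hane (hab.trans hprod.symm)
  have h3 : s * (a + b) = 2 * c := by
    rw [hbval, hμ]
    field_simp
    ring
  -- the main matrices
  set D : Matrix (Fin 2) (Fin 2) ℝ := !![a,0;0,b] with hD
  set D' : Matrix (Fin 2) (Fin 2) ℝ := !![b,0;0,a] with hD'
  have hDD' : D * D' = 1 := by
    rw [hD, hD']
    ext i j
    fin_cases i <;> fin_cases j <;>
      simp [Matrix.mul_apply, Fin.sum_univ_two, Matrix.one_apply, hab] <;>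
      linear_combination hab
  have hRα : Rot α = !![c,s;-s,c] := by rw [Rot, ← hc, ← hs]
  set B : Matrix (Fin 2) (Fin 2) ℝ := D * Rot α * D' * Rot α with hB
  set C : Matrix (Fin 2) (Fin 2) ℝ := D' * Rot α * D * Rot α with hC
  -- generator formulas
  have hγ' : ∀ j : ℕ, γ (j+1) = Rot (j * α) * D * Rot (-(j * α)) := by
    intro j
    rw [hγ (j+1)]
    have : ((((j:ℕ)+1 : ℕ) : ℝ) - 1) * Real.pi / (4 * g) = (j:ℝ) * α := by
      rw [hα]; push_cast; ring
    rw [this]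
  have hγinv : ∀ j : ℕ, (γ (j+1))⁻¹ = Rot (j * α) * D' * Rot (-(j * α)) := by
    intro j
    apply Matrix.inv_eq_right_inv
    rw [hγ' j, Rot_conj_mul]
    simp only [sub_self, Rot_zero, mul_one]
    rw [hDD', mul_one, Rot_cancel_inv]
  -- the two partial products
  have hword : fuchsianWord g γ = (B ^ g * Rot (-(2*g*α))) * (C ^ g * Rot (-(2*g*α))) := by
    have hP := prod_two_step (fun _ => D) (fun _ => D') α B hB (fun _ => rfl) (fun _ => rfl)
      (fun j => if j % 2 = 0 then γ (j + 1) else (γ (j + 1))⁻¹)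
      (by
        intro j
        by_cases hj : j % 2 = 0
        · simpa [hj] using hγ' j
        · simpa [hj] using hγinv j) g
    have hQ := prod_two_step (fun _ => D') (fun _ => D) α C hC (fun _ => rfl) (fun _ => rfl)
      (fun j => if j % 2 = 0 then (γ (j + 1))⁻¹ else γ (j + 1))
      (by
        intro j
        by_cases hj : j % 2 = 0
        · simpa [hj] using hγinv j
        · simpa [hj] using hγ' j) g
    rw [fuchsianWord, hP, hQ]
  have hangle : (2*(g:ℝ)*α) = Real.pi/2 := by
    rw [hα]; field_simp; ring
  -- explicit matrices for B and C
  have hBmat : B = !![c^2 - a^2*s^2, s*c*(1+a^2); -(s*c)*(b^2+1), c^2 - b^2*s^2] := by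
    rw [hB, hD, hD', hRα]; exact hBentries a b c s hab
  have hCmat : C = !![c^2 - b^2*s^2, s*c*(1+b^2); -(s*c)*(a^2+1), c^2 - a^2*s^2] := by
    rw [hC, hD, hD', hRα]
    exact hBentries b a c s (by linear_combination hab)
  -- conjugation between B and C
  have hCB : C = Rot (π/2) * B * Rot (-(π/2)) := by
    rw [hBmat, hCmat, Rot_quarter_conj]
    congr 1 <;> ring
  have hCgB : C ^ g = Rot (π/2) * B ^ g * Rot (-(π/2)) := by
    rw [hCB]; exact Rot_conj_pow _ _ _ (Rot_inv_cancel _) (Rot_cancel_inv _) g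
  -- B is elliptic of angle θ = π - 2α
  set θ : ℝ := Real.pi - 2*α with hθ
  have hsθ : Real.sin θ = Real.sin (2*α) := by rw [hθ, Real.sin_pi_sub]
  have hsθ_pos : 0 < Real.sin θ := by
    rw [hsθ]
    exact Real.sin_pos_of_pos_of_lt_pi (by linarith) (by linarith [Real.pi_pos])
  have hsθ_ne : Real.sin θ ≠ 0 := ne_of_gt hsθ_pos
  have ht : 2 * Real.cos θ = 2*c^2 - s^2*(a^2 + b^2) := by
    rw [hθ, Real.cos_pi_sub, Real.cos_two_mul, ← hc]
    linear_combination (s*(a+b)+2*c) * h3 + (-(2*s^2)) * hab + (-2) * h1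
  have hBB : B * B = (2 * Real.cos θ) • B - 1 := by
    rw [hBmat]; exact Bsq a b c s _ hab h1 ht
  -- evaluate B^(2g) via Chebyshev recursion
  have h2g : 2*g - 1 + 1 = 2*g := by omega
  have hpow := cheb B θ hsθ_ne hBB (2*g - 1)
  rw [h2g] at hpow
  have hcast : ((2*g - 1 : ℕ) : ℝ) = 2*(g:ℝ) - 1 := by
    have : (1:ℕ) ≤ 2*g := by omega
    push_cast [Nat.cast_sub this]; ring
  rw [hcast] at hpow
  have hzero : Real.sin ((2*(g:ℝ) - 1 + 1) * θ) = 0 := by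
    have : (2*(g:ℝ) - 1 + 1) * θ = ((2*g - 1 : ℤ) : ℝ) * Real.pi := by
      rw [hθ, hα]; push_cast; field_simp; ring
    rw [this]
    exact Real.sin_int_mul_pi _
  have hone : Real.sin ((2*(g:ℝ) - 1) * θ) = Real.sin θ := by
    have : (2*(g:ℝ) - 1) * θ = 2*α + (((g:ℤ) - 1 : ℤ) : ℝ) * (2 * Real.pi) := by
      rw [hθ, hα]; push_cast; field_simp; ring
    rw [this, Real.sin_add_int_mul_two_pi]
    exact hsθ.symm
  rw [hzero, hone, div_self hsθ_ne] at hpow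
  have hB2g : B ^ (2*g) = -1 := by
    rw [hpow]; simp
  -- assemble
  rw [hword, hangle, hCgB]
  have step1 : B ^ g * Rot (-(π/2)) * (Rot (π/2) * B ^ g * Rot (-(π/2)) * Rot (-(π/2)))
      = B ^ g * B ^ g * (Rot (-(π/2)) * Rot (-(π/2))) := by
    simp only [mul_assoc]
    rw [← mul_assoc (Rot (-(π/2))) (Rot (π/2)), Rot_inv_cancel, one_mul]
  rw [step1, ← pow_add]
  have : g + g = 2*g := by omega
  rw [this, hB2g]
  have : Rot (-(π/2)) * Rot (-(π/2)) = Rot (-π) := by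
    rw [Rot_mul]; congr 1; ring
  rw [this, Rot_neg_pi]
  simp
end

section
/- For the vertex v₁ = x₁ + iy₁ of the fundamental 4g-gon, with x₁ = −e^μ + tan(π/4g), y₁ = e^μ tan(π/4g), and e^μ = cot(π/4g) + √(cot²(π/4g) − 1), one has −2·arctan(y₁/(x₁ − tan(π/4g))) = π/(2g) (mod 2π); that is, the phase accumulated by e^{((2g−1)/4g)π Ŝ_B} at v₁ is exp(iBπ/(2g)). -/
open Real Complex

/-- with x₁ = −e^μ + tan(π/4g), y₁ = e^μ tan(π/4g), and
e^μ = cot(π/4g) + √(cot²(π/4g) − 1), one has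
−2·arctan(y₁/(x₁ − tan(π/4g))) = π/(2g) (mod 2π); hence the accumulated phase
exp(2iB·(−arctan(y₁/(x₁ − tan(π/4g))))) equals exp(iBπ/(2g)). -/
theorem vertex_phase (g : ℕ) (hg : 2 ≤ g) (B μ x₁ y₁ : ℝ)
    (hμ : Real.exp μ = Real.cos (Real.pi / (4 * g)) / Real.sin (Real.pi / (4 * g)) +
      Real.sqrt ((Real.cos (Real.pi / (4 * g)) / Real.sin (Real.pi / (4 * g))) ^ 2 - 1))
    (hx₁ : x₁ = -Real.exp μ + Real.tan (Real.pi / (4 * g)))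
    (hy₁ : y₁ = Real.exp μ * Real.tan (Real.pi / (4 * g))) :
    (∃ n : ℤ, -2 * Real.arctan (y₁ / (x₁ - Real.tan (Real.pi / (4 * g)))) =
      Real.pi / (2 * g) + 2 * Real.pi * n) ∧
    Complex.exp (2 * Complex.I * (B : ℂ) *
        ((-Real.arctan (y₁ / (x₁ - Real.tan (Real.pi / (4 * g)))) : ℝ) : ℂ)) =
      Complex.exp (Complex.I * (B : ℂ) * ((Real.pi / (2 * g) : ℝ) : ℂ)) := by
  have hgR : (2:ℝ) ≤ (g:ℝ) := by exact_mod_cast hg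
  have hg0 : (0:ℝ) < (g:ℝ) := by linarith
  set θ : ℝ := Real.pi / (4 * g) with hθ
  have hθpos : 0 < θ := by positivity
  have hθlt : θ < Real.pi / 2 := by
    rw [hθ, div_lt_div_iff₀ (by positivity) (by norm_num)]
    nlinarith [Real.pi_pos]
  have hexp : Real.exp μ ≠ 0 := (Real.exp_pos μ).ne'
  have hratio : y₁ / (x₁ - Real.tan θ) = -Real.tan θ := by
    rw [hx₁, hy₁]
    field_simp
    ring
  have harc : Real.arctan (y₁ / (x₁ - Real.tan θ)) = -θ := by
    rw [hratio, Real.arctan_neg, Real.arctan_tan (by linarith) hθlt]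
  constructor
  · exact ⟨0, by rw [harc]; push_cast; rw [hθ]; ring⟩
  · rw [harc]
    congr 1
    rw [hθ]
    push_cast
    ring
end
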